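/- arXiv:q-alg/9701013 — 2 statements merged into one kernel-verified Lean document; each statement's English description precedes it below -/
import Mathlib

section
/- Let d1, d2 ≥ 1 and let t be a fixed-point-free involution of Fin (2*(d1 + d2)) that maps the subset of elements with value < 2*d1 into itself (hence also maps its complement into itself). Let t1 and t2 be the fixed-point-free involutions induced by t on Fin (2*d1) and Fin (2*d2) respectively (via the order-preserving identifications of these with the two blocks), and let s, s1, s2 denote the cyclic shifts i ↦ i + 1 on Fin (2*(d1+d2)), Fin (2*d1) and Fin (2*d2). Then the number of orbits of s * t equals (number of orbits of s1 * t1) + (number of orbits of s2 * t2) − 1. -/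
/-- The number of orbits (cycles, counting fixed points) of a permutation `σ` of `α`,
i.e. the number of orbits of the cyclic subgroup generated by `σ` acting on `α`. -/
noncomputable def permOrbits {α : Type*} (σ : Equiv.Perm α) : ℕ :=
  Nat.card (MulAction.orbitRel.Quotient (Subgroup.zpowers σ) α)

open Equiv Equiv.Perm

namespace ChordAux

variable {α β : Type*}

def scSetoid (σ : Perm α) : Setoid α :=
  ⟨σ.SameCycle, ⟨fun x => SameCycle.refl σ x, fun h => h.symm, fun h h' => h.trans h'⟩⟩

lemma sc_of_pow {f : Perm α} {x y : α} {n : ℕ} (h : (f ^ n) x = y) : f.SameCycle x y :=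
  ⟨n, by rwa [zpow_natCast]⟩

lemma permOrbits_eq (σ : Perm α) :
    permOrbits σ = Nat.card (Quotient (scSetoid σ)) := by
  unfold permOrbits MulAction.orbitRel.Quotient
  apply Nat.card_congr
  refine Quotient.congrRight fun x y => ?_
  show x ∈ MulAction.orbit (Subgroup.zpowers σ) y ↔ σ.SameCycle x y
  rw [MulAction.mem_orbit_iff]
  constructor
  · rintro ⟨⟨g, hg⟩, h⟩
    obtain ⟨n, rfl⟩ := Subgroup.mem_zpowers_iff.mp hg
    exact (show σ.SameCycle y x from ⟨n, h⟩).symm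
  · intro h
    obtain ⟨n, hn⟩ := h.symm
    exact ⟨⟨σ ^ n, Subgroup.mem_zpowers_iff.mpr ⟨n, rfl⟩⟩, hn⟩

lemma key_sameCycle [Finite α] [DecidableEq α] (τ : Perm α) (a b : α) (hab : ¬ τ.SameCycle a b) :
    (Equiv.swap a b * τ).SameCycle a b := by
  classical
  set σ := Equiv.swap a b * τ with hσ
  by_contra h
  have main : ∀ i : ℕ, (σ ^ i) b = (τ ^ i) b := by
    intro i
    induction i with
    | zero => simp
    | succ i ih =>
      have hsa : (σ ^ (i + 1)) b = Equiv.swap a b ((τ ^ (i + 1)) b) := by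
        rw [pow_succ', pow_succ', Perm.mul_apply, Perm.mul_apply, ih]; rfl
      have h1 : (τ ^ (i + 1)) b ≠ a := by
        intro hc
        exact hab (SameCycle.symm (sc_of_pow hc))
      have h2 : (τ ^ (i + 1)) b ≠ b := by
        intro hc
        rw [hc, Equiv.swap_apply_right] at hsa
        exact h (SameCycle.symm (sc_of_pow hsa))
      rw [hsa, Equiv.swap_apply_of_ne_of_ne h1 h2]
  obtain ⟨j, hj⟩ : ∃ j, orderOf τ = j + 1 := ⟨orderOf τ - 1, by have := orderOf_pos τ; omega⟩
  have hcyc : (τ ^ (j + 1)) b = b := by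
    rw [← hj, pow_orderOf_eq_one]; rfl
  have hsa : (σ ^ (j + 1)) b = Equiv.swap a b ((τ ^ (j + 1)) b) := by
    rw [pow_succ', pow_succ', Perm.mul_apply, Perm.mul_apply, main j]; rfl
  rw [hcyc, Equiv.swap_apply_right] at hsa
  exact h (SameCycle.symm (sc_of_pow hsa))

/-- The relation describing same-cycle for `swap a b * τ` when `a, b` lie in
different cycles of `τ`. -/
def MR (τ : Perm α) (a b : α) (x y : α) : Prop :=
  τ.SameCycle x y ∨ (τ.SameCycle x a ∧ τ.SameCycle b y) ∨ (τ.SameCycle x b ∧ τ.SameCycle a y)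

lemma MR_trans {τ : Perm α} {a b : α} (hab : ¬ τ.SameCycle a b) {x y z : α}
    (h : MR τ a b x y) (g : MR τ a b y z) : MR τ a b x z := by
  rcases h with h | ⟨h1, h2⟩ | ⟨h1, h2⟩ <;> rcases g with g | ⟨g1, g2⟩ | ⟨g1, g2⟩
  · exact Or.inl (h.trans g)
  · exact Or.inr (Or.inl ⟨h.trans g1, g2⟩)
  · exact Or.inr (Or.inr ⟨h.trans g1, g2⟩)
  · exact Or.inr (Or.inl ⟨h1, h2.trans g⟩)
  · exact absurd ((h2.trans g1).symm) hab
  · exact Or.inl (h1.trans g2)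
  · exact Or.inr (Or.inr ⟨h1, h2.trans g⟩)
  · exact Or.inl (h1.trans g2)
  · exact absurd (h2.trans g1) hab

lemma MR_symm {τ : Perm α} {a b : α} {x y : α} (h : MR τ a b x y) : MR τ a b y x := by
  rcases h with h | ⟨h1, h2⟩ | ⟨h1, h2⟩
  · exact Or.inl h.symm
  · exact Or.inr (Or.inr ⟨h2.symm, h1.symm⟩)
  · exact Or.inr (Or.inl ⟨h2.symm, h1.symm⟩)

lemma merge [Finite α] [DecidableEq α] (τ : Perm α) (a b : α) (hab : ¬ τ.SameCycle a b) :
    permOrbits (Equiv.swap a b * τ) + 1 = permOrbits τ := by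
  classical
  set σ := Equiv.swap a b * τ with hσ
  have key : σ.SameCycle a b := key_sameCycle τ a b hab
  have σ_apply : ∀ x, σ x = Equiv.swap a b (τ x) := fun x => rfl
  have step_tau : ∀ x, σ.SameCycle x (τ x) := by
    intro x
    rcases eq_or_ne (τ x) a with h1 | h1
    · have hx : σ x = b := by rw [σ_apply, h1, Equiv.swap_apply_left]
      have h2 : σ.SameCycle x b := sc_of_pow (n := 1) (by simpa using hx)
      rw [h1]; exact h2.trans key.symm
    rcases eq_or_ne (τ x) b with h2 | h2
    · have hx : σ x = a := by rw [σ_apply, h2, Equiv.swap_apply_right]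
      have h3 : σ.SameCycle x a := sc_of_pow (n := 1) (by simpa using hx)
      rw [h2]; exact h3.trans key
    · exact sc_of_pow (n := 1)
        (by simp only [pow_one, σ_apply, Equiv.swap_apply_of_ne_of_ne h1 h2])
  have tau_pow : ∀ (x : α) (i : ℕ), σ.SameCycle x ((τ ^ i) x) := by
    intro x i
    induction i with
    | zero => simpa using SameCycle.refl σ x
    | succ i ih =>
      rw [pow_succ', Perm.mul_apply]
      exact ih.trans (step_tau _)
  have tau_sub : ∀ x y, τ.SameCycle x y → σ.SameCycle x y := by
    intro x y h
    obtain ⟨i, _, hi⟩ := h.exists_pow_eq'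
    exact hi ▸ tau_pow x i
  have Rstep : ∀ u, MR τ a b u (σ u) := by
    intro u
    rcases eq_or_ne (τ u) a with h1 | h1
    · have hx : σ u = b := by rw [σ_apply, h1, Equiv.swap_apply_left]
      rw [hx]
      exact Or.inr (Or.inl ⟨h1 ▸ sc_of_pow (n := 1) (by simp), SameCycle.refl τ b⟩)
    rcases eq_or_ne (τ u) b with h2 | h2
    · have hx : σ u = a := by rw [σ_apply, h2, Equiv.swap_apply_right]
      rw [hx]
      exact Or.inr (Or.inr ⟨h2 ▸ sc_of_pow (n := 1) (by simp), SameCycle.refl τ a⟩)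
    · have hx : σ u = τ u := by rw [σ_apply, Equiv.swap_apply_of_ne_of_ne h1 h2]
      rw [hx]
      exact Or.inl (sc_of_pow (n := 1) (by simp))
  have MRpow : ∀ (x : α) (i : ℕ), MR τ a b x ((σ ^ i) x) := by
    intro x i
    induction i with
    | zero => exact Or.inl (by simpa using SameCycle.refl τ x)
    | succ i ih =>
      rw [pow_succ', Perm.mul_apply]
      exact MR_trans hab ih (Rstep _)
  have forward : ∀ x y, σ.SameCycle x y → MR τ a b x y := by
    intro x y h
    obtain ⟨i, _, hi⟩ := h.exists_pow_eq'
    exact hi ▸ MRpow x i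
  have backward : ∀ x y, MR τ a b x y → σ.SameCycle x y := by
    rintro x y (h | ⟨h1, h2⟩ | ⟨h1, h2⟩)
    · exact tau_sub x y h
    · exact ((tau_sub x a h1).trans key).trans (tau_sub b y h2)
    · exact ((tau_sub x b h1).trans key.symm).trans (tau_sub a y h2)
  rw [permOrbits_eq, permOrbits_eq]
  let u : α → Quotient (scSetoid τ) :=
    fun x => if τ.SameCycle b x then Quotient.mk (scSetoid τ) a else Quotient.mk (scSetoid τ) x
  have hu : ∀ x y : α, σ.SameCycle x y → u x = u y := by
    intro x y h
    rcases forward x y h with h | ⟨h1, h2⟩ | ⟨h1, h2⟩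
    · by_cases hb : τ.SameCycle b x
      · show (if _ then _ else _) = (if _ then _ else _)
        rw [if_pos hb, if_pos (hb.trans h)]
      · show (if _ then _ else _) = (if _ then _ else _)
        rw [if_neg hb, if_neg (fun hc => hb (hc.trans h.symm))]
        exact Quotient.sound h
    · have hbx : ¬ τ.SameCycle b x := fun hc => hab ((hc.trans h1).symm)
      show (if _ then _ else _) = (if _ then _ else _)
      rw [if_neg hbx, if_pos h2]
      exact Quotient.sound h1
    · have hbx : τ.SameCycle b x := h1.symm
      have hby : ¬ τ.SameCycle b y := fun hc => hab ((hc.trans h2.symm).symm)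
      show (if _ then _ else _) = (if _ then _ else _)
      rw [if_pos hbx, if_neg hby]
      exact Quotient.sound h2
  have himg : ∀ x, u x ≠ Quotient.mk (scSetoid τ) b := by
    intro x hc
    by_cases hb : τ.SameCycle b x
    · rw [show u x = Quotient.mk (scSetoid τ) a from if_pos hb] at hc
      exact hab (Quotient.exact hc)
    · rw [show u x = Quotient.mk (scSetoid τ) x from if_neg hb] at hc
      exact hb (Quotient.exact hc).symm
  let F : Quotient (scSetoid σ) → {q : Quotient (scSetoid τ) // q ≠ Quotient.mk (scSetoid τ) b} :=
    Quotient.lift (fun x => (⟨u x, himg x⟩ : {q : Quotient (scSetoid τ) // q ≠ Quotient.mk (scSetoid τ) b}))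
      (fun x y h => Subtype.ext (hu x y h))
  let G : {q : Quotient (scSetoid τ) // q ≠ Quotient.mk (scSetoid τ) b} → Quotient (scSetoid σ) :=
    fun q => Quotient.lift (fun x => Quotient.mk (scSetoid σ) x)
      (fun x y h => Quotient.sound (tau_sub x y h)) q.1
  have hFG : Function.LeftInverse G F := by
    intro z
    induction z using Quotient.ind with
    | _ x =>
      show Quotient.lift (fun x => Quotient.mk (scSetoid σ) x)
        (fun x y h => Quotient.sound (tau_sub x y h)) (u x) = Quotient.mk (scSetoid σ) x
      by_cases hb : τ.SameCycle b x
      · rw [show u x = Quotient.mk (scSetoid τ) a from if_pos hb]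
        exact Quotient.sound (key.trans (tau_sub b x hb))
      · rw [show u x = Quotient.mk (scSetoid τ) x from if_neg hb]
        rfl
  have hGF : Function.RightInverse G F := by
    rintro ⟨q, hq⟩
    revert hq
    induction q using Quotient.ind with
    | _ x =>
      intro hq
      have hbx : ¬ τ.SameCycle b x := fun hc => hq (Quotient.sound hc.symm)
      apply Subtype.ext
      show u x = Quotient.mk (scSetoid τ) x
      exact if_neg hbx
  have e1 : Quotient (scSetoid σ) ≃ {q : Quotient (scSetoid τ) // q ≠ Quotient.mk (scSetoid τ) b} := ⟨F, G, hFG, hGF⟩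
  have e2 : Option {q : Quotient (scSetoid τ) // q ≠ Quotient.mk (scSetoid τ) b} ≃ Quotient (scSetoid τ) :=
    Equiv.optionSubtypeNe _
  rw [Nat.card_congr e1, ← Nat.card_congr e2, Finite.card_option]



lemma sumCongr_pow (σ : Perm α) (σ' : Perm β) (n : ℕ) :
    (Equiv.Perm.sumCongr σ σ' : Perm (α ⊕ β)) ^ n = Equiv.Perm.sumCongr (σ ^ n) (σ' ^ n) := by
  induction n with
  | zero => rw [pow_zero, pow_zero, pow_zero, Equiv.Perm.sumCongr_one]
  | succ n ih => rw [pow_succ, ih, Equiv.Perm.sumCongr_mul, ← pow_succ, ← pow_succ]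

lemma sc_sum_inl [Finite α] [Finite β] {σ : Perm α} {σ' : Perm β} {x y : α} :
    (Equiv.Perm.sumCongr σ σ').SameCycle (Sum.inl x) (Sum.inl y) ↔ σ.SameCycle x y := by
  constructor
  · intro h
    obtain ⟨n, _, hn⟩ := h.exists_pow_eq'
    rw [sumCongr_pow] at hn
    simp only [Equiv.Perm.sumCongr_apply, Sum.map_inl] at hn
    exact sc_of_pow (Sum.inl.inj hn)
  · intro h
    obtain ⟨n, _, hn⟩ := h.exists_pow_eq'
    exact sc_of_pow (n := n) (by rw [sumCongr_pow]; simp [hn])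

lemma sc_sum_inr [Finite α] [Finite β] {σ : Perm α} {σ' : Perm β} {x y : β} :
    (Equiv.Perm.sumCongr σ σ').SameCycle (Sum.inr x) (Sum.inr y) ↔ σ'.SameCycle x y := by
  constructor
  · intro h
    obtain ⟨n, _, hn⟩ := h.exists_pow_eq'
    rw [sumCongr_pow] at hn
    simp only [Equiv.Perm.sumCongr_apply, Sum.map_inr] at hn
    exact sc_of_pow (Sum.inr.inj hn)
  · intro h
    obtain ⟨n, _, hn⟩ := h.exists_pow_eq'
    exact sc_of_pow (n := n) (by rw [sumCongr_pow]; simp [hn])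

lemma sc_sum_not [Finite α] [Finite β] {σ : Perm α} {σ' : Perm β} {x : α} {y : β} :
    ¬ (Equiv.Perm.sumCongr σ σ').SameCycle (Sum.inl x) (Sum.inr y) := by
  intro h
  obtain ⟨n, _, hn⟩ := h.exists_pow_eq'
  rw [sumCongr_pow] at hn
  simp only [Equiv.Perm.sumCongr_apply, Sum.map_inl] at hn
  exact Sum.inl_ne_inr hn

lemma permOrbits_sumCongr [Finite α] [Finite β] (σ : Perm α) (σ' : Perm β) :
    permOrbits (Equiv.Perm.sumCongr σ σ') = permOrbits σ + permOrbits σ' := by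
  rw [permOrbits_eq, permOrbits_eq, permOrbits_eq, ← Nat.card_sum]
  apply Nat.card_congr
  refine ⟨Quotient.lift (fun z => Sum.elim (fun x => Sum.inl (Quotient.mk (scSetoid σ) x))
      (fun y => Sum.inr (Quotient.mk (scSetoid σ') y)) z) ?_,
    Sum.elim (Quotient.lift (fun x => Quotient.mk (scSetoid (Equiv.Perm.sumCongr σ σ')) (Sum.inl x))
        (fun x y h => Quotient.sound (sc_sum_inl.mpr h)))
      (Quotient.lift (fun y => Quotient.mk (scSetoid (Equiv.Perm.sumCongr σ σ')) (Sum.inr y))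
        (fun x y h => Quotient.sound (sc_sum_inr.mpr h))),
    ?_, ?_⟩
  · rintro (x | x) (y | y) h
    · exact congrArg Sum.inl (Quotient.sound (sc_sum_inl.mp h))
    · exact absurd h sc_sum_not
    · exact absurd h.symm sc_sum_not
    · exact congrArg Sum.inr (Quotient.sound (sc_sum_inr.mp h))
  · intro z
    induction z using Quotient.ind with
    | _ w => rcases w with x | y <;> rfl
  · rintro (q | q) <;> (induction q using Quotient.ind with | _ w => rfl)

/-- `Equiv.permCongr` as a multiplicative equivalence. -/
def permCongrMulEquiv (e : α ≃ β) : Perm α ≃* Perm β :=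
  { e.permCongr with
    map_mul' := fun σ τ => by
      ext x
      simp [Equiv.permCongr_apply, Perm.mul_apply] }

lemma permCongr_zpow (e : α ≃ β) (σ : Perm α) (n : ℤ) :
    (e.permCongr σ) ^ n = e.permCongr (σ ^ n) :=
  (map_zpow (permCongrMulEquiv e) σ n).symm

lemma permCongr_pow (e : α ≃ β) (σ : Perm α) (n : ℕ) :
    (e.permCongr σ) ^ n = e.permCongr (σ ^ n) :=
  (map_pow (permCongrMulEquiv e) σ n).symm

lemma permOrbits_permCongr (e : α ≃ β) (σ : Perm α) :
    permOrbits (e.permCongr σ) = permOrbits σ := by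
  rw [permOrbits_eq, permOrbits_eq]
  refine (Nat.card_congr (Quotient.congr e fun x y => ?_)).symm
  show σ.SameCycle x y ↔ (e.permCongr σ).SameCycle (e x) (e y)
  constructor
  · rintro ⟨n, hn⟩
    exact ⟨n, by rw [permCongr_zpow]; simp [hn]⟩
  · rintro ⟨n, hn⟩
    rw [permCongr_zpow] at hn
    simp only [Equiv.permCongr_apply, Equiv.symm_apply_apply] at hn
    exact ⟨n, e.injective hn⟩

lemma finRotate_val {M : ℕ} (x : Fin M) :
    ((finRotate M x : Fin M) : ℕ) = if (x : ℕ) = M - 1 then 0 else (x : ℕ) + 1 := by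
  obtain ⟨m, rfl⟩ : ∃ m, M = m + 1 := ⟨M - 1, by have := x.pos; omega⟩
  rw [finRotate_succ_apply]
  rcases eq_or_ne (x : ℕ) m with h | h
  · have hx : x = Fin.last m := Fin.ext (by simpa using h)
    rw [hx, Fin.last_add_one]
    simp [h]
  · have hx : x < Fin.last m := by
      rw [Fin.lt_def]
      have := x.isLt
      simp only [Fin.val_last]
      omega
    rw [Fin.val_add_one_of_lt hx, if_neg (by simpa using h)]

end ChordAux

open ChordAux

/-- Additivity of the circle count under connected sum of chord diagrams:
if the fixed-point-free involution `t` of `Fin (2*(d1+d2))` preserves the block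
of elements with value `< 2*d1` (hence also its complement), and `t1`, `t2` are the
induced fixed-point-free involutions on `Fin (2*d1)` and `Fin (2*d2)`, then
`c(D) = c(D1) + c(D2) - 1`, where the circle counts are the numbers of orbits of the
products with the respective cyclic shifts. -/
theorem stmt2 (d1 d2 : ℕ) (h1 : 1 ≤ d1) (h2 : 1 ≤ d2)
    (t : Equiv.Perm (Fin (2 * (d1 + d2))))
    (ht_inv : t * t = 1) (ht_fpf : ∀ i, t i ≠ i)
    (hblock : ∀ i : Fin (2 * (d1 + d2)), (i : ℕ) < 2 * d1 → ((t i : ℕ) < 2 * d1))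
    (t1 : Equiv.Perm (Fin (2 * d1))) (t2 : Equiv.Perm (Fin (2 * d2)))
    (ht1 : ∀ i : Fin (2 * d1),
      (t1 i : ℕ) = ((t ⟨(i : ℕ), by have := i.isLt; omega⟩) : ℕ))
    (ht2 : ∀ i : Fin (2 * d2),
      2 * d1 + (t2 i : ℕ) = ((t ⟨2 * d1 + (i : ℕ), by have := i.isLt; omega⟩) : ℕ)) :
    permOrbits (finRotate (2 * (d1 + d2)) * t) + 1 =
      permOrbits (finRotate (2 * d1) * t1) + permOrbits (finRotate (2 * d2) * t2) := by
  classical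
  set e : Fin (2 * d1) ⊕ Fin (2 * d2) ≃ Fin (2 * (d1 + d2)) :=
    finSumFinEquiv.trans (finCongr (by ring)) with he_def
  have he_inl : ∀ i : Fin (2 * d1), ((e (Sum.inl i)) : ℕ) = (i : ℕ) := by
    intro i
    rw [he_def]
    simp
  have he_inr : ∀ j : Fin (2 * d2), ((e (Sum.inr j)) : ℕ) = 2 * d1 + (j : ℕ) := by
    intro j
    rw [he_def]
    simp
  set σ1 := finRotate (2 * d1) * t1 with hσ1
  set σ2 := finRotate (2 * d2) * t2 with hσ2
  set τ : Equiv.Perm (Fin (2 * (d1 + d2))) :=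
    e.permCongr (Equiv.Perm.sumCongr σ1 σ2) with hτ
  have ha : (0 : ℕ) < 2 * (d1 + d2) := by omega
  have hb' : 2 * d1 < 2 * (d1 + d2) := by omega
  set a : Fin (2 * (d1 + d2)) := ⟨0, ha⟩ with ha_def
  set b : Fin (2 * (d1 + d2)) := ⟨2 * d1, hb'⟩ with hb_def
  have hav : (a : ℕ) = 0 := by rw [ha_def]
  have hbv : (b : ℕ) = 2 * d1 := by rw [hb_def]
  have p0 : (0 : ℕ) < 2 * d1 := by omega
  have hab : ¬ τ.SameCycle a b := by
    intro h
    obtain ⟨n, _, hn⟩ := h.exists_pow_eq'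
    have ha0 : a = e (Sum.inl ⟨0, p0⟩) := Fin.ext (by rw [hav, he_inl])
    rw [ha0, hτ, permCongr_pow, Equiv.permCongr_apply, Equiv.symm_apply_apply,
      sumCongr_pow] at hn
    simp only [Equiv.Perm.sumCongr_apply, Sum.map_inl] at hn
    have hval := he_inl ((σ1 ^ n) ⟨0, p0⟩)
    rw [hn, hbv] at hval
    have hlt := ((σ1 ^ n) (⟨0, p0⟩ : Fin (2 * d1))).isLt
    omega
  have hswap : ∀ z : Fin (2 * (d1 + d2)),
      ((Equiv.swap a b z) : ℕ) =
        if (z : ℕ) = 0 then 2 * d1 else if (z : ℕ) = 2 * d1 then 0 else (z : ℕ) := by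
    intro z
    by_cases hza : z = a
    · rw [hza, Equiv.swap_apply_left, if_pos hav, hbv]
    by_cases hzb : z = b
    · rw [hzb, Equiv.swap_apply_right, hbv, if_neg (by omega), if_pos rfl, hav]
    · rw [Equiv.swap_apply_of_ne_of_ne hza hzb,
        if_neg (fun hc => hza (Fin.ext (by rw [hc, hav]))),
        if_neg (fun hc => hzb (Fin.ext (by rw [hc, hbv])))]
  have hmain : finRotate (2 * (d1 + d2)) * t = Equiv.swap a b * τ := by
    apply Equiv.ext
    intro i
    apply Fin.ext
    rw [Equiv.Perm.mul_apply, Equiv.Perm.mul_apply]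
    have hlt : ((t i) : ℕ) < 2 * (d1 + d2) := (t i).isLt
    by_cases hi : (i : ℕ) < 2 * d1
    · have hti : ((t i) : ℕ) < 2 * d1 := hblock i hi
      have ht1i : ((t1 ⟨(i : ℕ), hi⟩ : Fin (2 * d1)) : ℕ) = ((t i) : ℕ) := by
        rw [ht1 ⟨(i : ℕ), hi⟩]
      have hei : e (Sum.inl ⟨(i : ℕ), hi⟩) = i := Fin.ext (he_inl _)
      have hone : τ i = e (Sum.inl (σ1 ⟨(i : ℕ), hi⟩)) := by
        conv_lhs => rw [hτ, ← hei]
        rw [Equiv.permCongr_apply, Equiv.symm_apply_apply]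
        congr 1
      have hτi : ((τ i) : ℕ) =
          if ((t i) : ℕ) = 2 * d1 - 1 then 0 else ((t i) : ℕ) + 1 := by
        rw [hone, he_inl, hσ1, Equiv.Perm.mul_apply, finRotate_val, ht1i]
      by_cases hc : ((t i) : ℕ) = 2 * d1 - 1
      · have hτ0 : ((τ i) : ℕ) = 0 := by rw [hτi, if_pos hc]
        rw [finRotate_val, hswap, hτ0, if_neg (by omega), if_pos rfl]
        omega
      · have hτ0 : ((τ i) : ℕ) = ((t i) : ℕ) + 1 := by rw [hτi, if_neg hc]
        rw [finRotate_val, hswap, hτ0, if_neg (by omega), if_neg (by omega),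
          if_neg (by omega)]
    · have hi2 : 2 * d1 ≤ (i : ℕ) := le_of_not_gt hi
      have hilt : (i : ℕ) < 2 * (d1 + d2) := i.isLt
      have hj : (i : ℕ) - 2 * d1 < 2 * d2 := by omega
      have ht2j : 2 * d1 + ((t2 ⟨(i : ℕ) - 2 * d1, hj⟩ : Fin (2 * d2)) : ℕ) = ((t i) : ℕ) := by
        rw [ht2 ⟨(i : ℕ) - 2 * d1, hj⟩]
        congr 2
        exact Fin.ext (by simp; omega)
      have hei : e (Sum.inr ⟨(i : ℕ) - 2 * d1, hj⟩) = i := by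
        apply Fin.ext
        rw [he_inr]
        simp
        omega
      have hone : τ i = e (Sum.inr (σ2 ⟨(i : ℕ) - 2 * d1, hj⟩)) := by
        conv_lhs => rw [hτ, ← hei]
        rw [Equiv.permCongr_apply, Equiv.symm_apply_apply]
        congr 1
      have ht2lt := (t2 (⟨(i : ℕ) - 2 * d1, hj⟩ : Fin (2 * d2))).isLt
      have hτi : ((τ i) : ℕ) = 2 * d1 +
          (if ((t2 ⟨(i : ℕ) - 2 * d1, hj⟩ : Fin (2 * d2)) : ℕ) = 2 * d2 - 1 then 0
           else ((t2 ⟨(i : ℕ) - 2 * d1, hj⟩ : Fin (2 * d2)) : ℕ) + 1) := by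
        rw [hone, he_inr, hσ2, Equiv.Perm.mul_apply, finRotate_val]
      by_cases hc : ((t2 ⟨(i : ℕ) - 2 * d1, hj⟩ : Fin (2 * d2)) : ℕ) = 2 * d2 - 1
      · have hτ0 : ((τ i) : ℕ) = 2 * d1 + 0 := by rw [hτi, if_pos hc]
        rw [finRotate_val, hswap, hτ0, if_pos (by omega), if_neg (by omega),
          if_pos (by omega)]
      · have hτ0 : ((τ i) : ℕ) = 2 * d1 +
            (((t2 ⟨(i : ℕ) - 2 * d1, hj⟩ : Fin (2 * d2)) : ℕ) + 1) := by
          rw [hτi, if_neg hc]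
        rw [finRotate_val, hswap, hτ0, if_neg (by omega), if_neg (by omega),
          if_neg (by omega)]
        omega
  rw [hmain, ChordAux.merge τ a b hab, hτ, permOrbits_permCongr, permOrbits_sumCongr]
end

section
/- With V, G, w, r, R, f, the coloring sum Φ, the edge deletion G' of the edge {v1, v2}, the contraction G'' on the vertex type {v : V // v ≠ v2}, and the contracted weight function w'' as defined in the context, one has Φ(G, w) = Φ(G', w) − Φ(G'', w''): the weighted coloring sum satisfies the chromatic (deletion–contraction) relation (Lemma 7.3 of the paper). -/
open scoped Classical

/-- The weighted coloring sum `Φ(G, w)`: the sum over all proper `r`-colorings `c` of `G`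
of the product over all colors `i : Fin r` of `f i` applied to the total weight of the
vertices colored `i`. -/
noncomputable def coloringSum {V : Type*} [Fintype V] [DecidableEq V] {R : Type*}
    [CommRing R] (G : SimpleGraph V) (w : V → ℕ) (r : ℕ) (f : Fin r → ℕ → R) : R :=
  ∑ c : V → Fin r,
    if ∀ a b : V, G.Adj a b → c a ≠ c b then
      ∏ i : Fin r, f i (∑ v ∈ Finset.univ.filter fun v => c v = i, w v)
    else 0

/-- The contraction `G''` of the weighted graph `G` along the edge `{v1, v2}`:
a simple graph on the subtype `{v : V // v ≠ v2}` in which `a` and `b` are adjacent iff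
`G'.Adj a b`, or (`a = v1` and `G'.Adj v2 b`), or (`b = v1` and `G'.Adj a v2`), where
`G'` is `G` with the edge `{v1, v2}` deleted. -/
def contractGraph {V : Type*} (G : SimpleGraph V) (v1 v2 : V) :
    SimpleGraph {v : V // v ≠ v2} where
  Adj a b :=
    (G.deleteEdges {s(v1, v2)}).Adj (a : V) (b : V) ∨
      ((a : V) = v1 ∧ (G.deleteEdges {s(v1, v2)}).Adj v2 (b : V)) ∨
      ((b : V) = v1 ∧ (G.deleteEdges {s(v1, v2)}).Adj (a : V) v2)
  symm := by
    constructor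
    intro a b h
    rcases h with h | ⟨ha, h⟩ | ⟨hb, h⟩
    · exact Or.inl h.symm
    · exact Or.inr (Or.inr ⟨ha, h.symm⟩)
    · exact Or.inr (Or.inl ⟨hb, h.symm⟩)
  loopless := by
    constructor
    intro a h
    rcases h with h | ⟨ha, h⟩ | ⟨ha, h⟩
    · exact (G.deleteEdges {s(v1, v2)}).loopless.irrefl (a : V) h
    · rw [SimpleGraph.deleteEdges_adj] at h
      exact h.2 (by rw [ha]; exact Set.mem_singleton_iff.mpr Sym2.eq_swap)
    · rw [SimpleGraph.deleteEdges_adj] at h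
      exact h.2 (by rw [ha]; exact Set.mem_singleton_iff.mpr rfl)

/-- Lemma 7.3 (the chromatic relation): the weighted coloring sum satisfies the
deletion–contraction relation `Φ(G, w) = Φ(G', w) − Φ(G'', w'')`, where `G'` is `G` with
the edge `{v1, v2}` deleted, `G''` is the contraction along that edge, and the contracted
weight function agrees with `w` except that the vertex `v1` gets weight `w v1 + w v2`. -/
theorem stmt3 {V : Type*} [Fintype V] [DecidableEq V] {R : Type*} [CommRing R]
    (G : SimpleGraph V) (w : V → ℕ) (r : ℕ) (hr : 1 ≤ r) (f : Fin r → ℕ → R)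
    (v1 v2 : V) (hne : v1 ≠ v2) (hadj : G.Adj v1 v2) :
    coloringSum G w r f =
      coloringSum (G.deleteEdges {s(v1, v2)}) w r f -
        coloringSum (contractGraph G v1 v2)
          (fun v => if (v : V) = v1 then w v1 + w v2 else w (v : V)) r f := by
    classical
    set G' := G.deleteEdges {s(v1, v2)} with hG'
    have key : coloringSum G' w r f =
        coloringSum G w r f +
          coloringSum (contractGraph G v1 v2)
            (fun v => if (v : V) = v1 then w v1 + w v2 else w (v : V)) r f := by
      unfold coloringSum
      rw [← Finset.sum_filter_add_sum_filter_not Finset.univ (fun c : V → Fin r => c v1 ≠ c v2)]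
      congr 1
      · -- colorings with c v1 ≠ c v2 ↔ proper colorings of G
        rw [Finset.sum_filter]
        apply Finset.sum_congr rfl
        intro c _
        by_cases h1 : c v1 = c v2
        · rw [if_neg (by simpa using h1), if_neg]
          intro hprop
          exact hprop v1 v2 hadj h1
        · rw [if_pos h1]
          have hiff : (∀ a b : V, G'.Adj a b → c a ≠ c b) ↔
              (∀ a b : V, G.Adj a b → c a ≠ c b) := by
            constructor
            · intro hp a b hab
              by_cases hs : s(a, b) = s(v1, v2)
              · rcases Sym2.eq_iff.mp hs with ⟨rfl, rfl⟩ | ⟨rfl, rfl⟩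
                · exact h1
                · exact fun h => h1 h.symm
              · refine hp a b ?_
                rw [hG', SimpleGraph.deleteEdges_adj]
                exact ⟨hab, hs⟩
            · intro hp a b hab
              exact hp a b (SimpleGraph.deleteEdges_adj.mp hab).1
          simp only [hiff]
      · -- colorings with c v1 = c v2 ↔ proper colorings of the contraction
        have hfilt : Finset.univ.filter (fun c : V → Fin r => ¬ c v1 ≠ c v2) =
            Finset.univ.filter (fun c : V → Fin r => c v1 = c v2) := by
          apply Finset.filter_congr; intro c _; simp
        rw [hfilt]
        refine Finset.sum_nbij' (fun c => fun v : {v : V // v ≠ v2} => c (v : V))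
          (fun c'' => fun v => if h : v = v2 then c'' ⟨v1, hne⟩ else c'' ⟨v, h⟩)
          ?_ ?_ ?_ ?_ ?_
        · intro c _; exact Finset.mem_univ _
        · intro c'' _
          simp only [Finset.mem_filter, Finset.mem_univ, true_and]
          simp [hne]
        · intro c hc
          funext v
          by_cases h : v = v2
          · subst h
            simp only [dif_pos rfl]
            exact (Finset.mem_filter.mp hc).2
          · simp only [dif_neg h]
        · intro c'' _
          funext v
          simp only [dif_neg v.prop, Subtype.eta]
        · intro c hc
          have hp : c v1 = c v2 := (Finset.mem_filter.mp hc).2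
          have hiff : (∀ a b : V, G'.Adj a b → c a ≠ c b) ↔
              (∀ a b : {v : V // v ≠ v2}, (contractGraph G v1 v2).Adj a b →
                c (a : V) ≠ c (b : V)) := by
            constructor
            · intro h a b hab
              rcases hab with hab | ⟨ha1, hab⟩ | ⟨hb1, hab⟩
              · exact h _ _ hab
              · rw [ha1, hp]; exact h _ _ hab
              · intro hcc
                exact h _ _ hab (by rw [hcc, hb1, hp])
            · intro h a b hab
              by_cases ha : a = v2
              · have hb : b ≠ v2 := by
                  intro hb
                  rw [ha, hb] at hab
                  exact G'.loopless.irrefl _ hab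
                have h2 := h ⟨v1, hne⟩ ⟨b, hb⟩ (Or.inr (Or.inl ⟨rfl, by rwa [ha] at hab⟩))
                rw [ha, ← hp]
                exact h2
              · by_cases hb : b = v2
                · have h2 := h ⟨a, ha⟩ ⟨v1, hne⟩
                    (Or.inr (Or.inr ⟨rfl, by rwa [hb] at hab⟩))
                  rw [hb, ← hp]
                  exact h2
                · exact h ⟨a, ha⟩ ⟨b, hb⟩ (Or.inl hab)
          simp only [hiff]
          congr 1
          apply Finset.prod_congr rfl
          intro i _
          congr 1
          -- weight sums agree
          rw [Finset.sum_filter, Finset.sum_filter]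
          have hsub : (∑ v : {v : V // v ≠ v2},
              (if c (v : V) = i then (if (v : V) = v1 then w v1 + w v2 else w (v : V)) else 0)) =
              ∑ v ∈ Finset.univ.erase v2,
                (if c v = i then (if v = v1 then w v1 + w v2 else w v) else 0) :=
            (Finset.sum_subtype (p := fun v => v ≠ v2) (Finset.univ.erase v2)
              (fun x => by simp [Finset.mem_erase])
              (fun v => if c v = i then (if v = v1 then w v1 + w v2 else w v) else 0)).symm
          rw [hsub]
          have h2 : (∑ v : V, (if c v = i then w v else 0)) =
              (if c v2 = i then w v2 else 0) + ∑ v ∈ Finset.univ.erase v2,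
                (if c v = i then w v else 0) :=
            (Finset.add_sum_erase _ _ (Finset.mem_univ v2)).symm
          have hv1 : v1 ∈ Finset.univ.erase v2 := Finset.mem_erase.mpr ⟨hne, Finset.mem_univ _⟩
          rw [h2, ← Finset.add_sum_erase _ _ hv1, ← Finset.add_sum_erase _
            (fun v => if c v = i then (if v = v1 then w v1 + w v2 else w v) else 0) hv1]
          have hrest : (∑ v ∈ (Finset.univ.erase v2).erase v1,
              (if c v = i then (if v = v1 then w v1 + w v2 else w v) else 0)) =
              ∑ v ∈ (Finset.univ.erase v2).erase v1, (if c v = i then w v else 0) := by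
            apply Finset.sum_congr rfl
            intro v hv
            have : v ≠ v1 := (Finset.mem_erase.mp hv).1
            simp [this]
          rw [hrest, if_pos rfl, ← add_assoc]
          congr 1
          by_cases hi : c v1 = i <;> simp [hi, ← hp, Nat.add_comm]
    rw [key]; ring
end
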